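/- For every λ ≥ 1, every f ∈ E_λ has a representative that extends to an entire function on ℂ^d: there exists an entire (complex analytic) function F : ℂ^d → ℂ such that F(x) = f(x) for Lebesgue-almost every x ∈ ℝ^d. -/

import Mathlib

open MeasureTheory Real Set
open scoped BigOperators ENNReal RealInnerProductSpace

noncomputable section

/-- Physicists' Hermite polynomials `H_n`, via the recursion
`H_0 = 1`, `H_{n+1}(x) = 2 x H_n(x) - H_n'(x)`. -/
def physHermite : ℕ → Polynomial ℝ
  | 0 => 1
  | n + 1 => 2 * Polynomial.X * physHermite n - Polynomial.derivative (physHermite n)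

/-- The `L²`-normalized Hermite functions on `ℝ`:
`h_n(t) = (2^n n! √π)^{-1/2} H_n(t) e^{-t²/2}`. -/
def hermiteFun (n : ℕ) (t : ℝ) : ℝ :=
  ((2 : ℝ) ^ n * (n.factorial : ℝ) * Real.sqrt π) ^ (-(1 : ℝ) / 2) *
    (physHermite n).eval t * Real.exp (-t ^ 2 / 2)

/-- The tensor Hermite function `Φ_α(y) = ∏_j h_{α_j}(y_j)` on `ℝ^{d₁}`. -/
def hermiteProd {d₁ : ℕ} (α : Fin d₁ → ℕ) (y : EuclideanSpace ℝ (Fin d₁)) : ℝ :=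
  ∏ j, hermiteFun (α j) (y j)

/-- `g : ℝ^n → ℂ` has Fourier transform (convention `ĝ(ξ) = c ∫ g(x) e^{-i x·ξ} dx`)
supported in the closed Euclidean ball of radius `r`:  `g` is pointwise the inverse
Fourier integral of a square-integrable function vanishing outside that ball. -/
def Bandlimited {n : ℕ} (r : ℝ) (g : EuclideanSpace ℝ (Fin n) → ℂ) : Prop :=
  ∃ F : EuclideanSpace ℝ (Fin n) → ℂ,
    MemLp F 2 volume ∧
    (∀ ξ, ξ ∉ Metric.closedBall (0 : EuclideanSpace ℝ (Fin n)) r → F ξ = 0) ∧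
    ∀ z, g z = ∫ ξ, F ξ * Complex.exp (Complex.I * ((inner ℝ ξ z : ℝ) : ℂ))

/-- The first `d₁` coordinates of a point of `ℝ^{d₁+d₂}`. -/
def fstC (d₁ d₂ : ℕ) (x : EuclideanSpace ℝ (Fin (d₁ + d₂))) : EuclideanSpace ℝ (Fin d₁) :=
  WithLp.toLp 2 (fun i => x (Fin.castAdd d₂ i))

/-- The last `d₂` coordinates of a point of `ℝ^{d₁+d₂}`. -/
def sndC (d₁ d₂ : ℕ) (x : EuclideanSpace ℝ (Fin (d₁ + d₂))) : EuclideanSpace ℝ (Fin d₂) :=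
  WithLp.toLp 2 (fun j => x (Fin.natAdd d₁ j))

/-- Gluing `y ∈ ℝ^{d₁}` and `z ∈ ℝ^{d₂}` to the point `(y,z) ∈ ℝ^{d₁+d₂}`. -/
def glue {d₁ d₂ : ℕ} (y : EuclideanSpace ℝ (Fin d₁)) (z : EuclideanSpace ℝ (Fin d₂)) :
    EuclideanSpace ℝ (Fin (d₁ + d₂)) :=
  WithLp.toLp 2 (fun i => Fin.addCases (fun i₁ => y i₁) (fun j => z j) i)

/-- Degree `|α|` of a multiindex. -/
def mdeg {n : ℕ} (α : Fin n → ℕ) : ℕ := ∑ i, α i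

/-- Factorial `α!` of a multiindex. -/
def mfact {n : ℕ} (α : Fin n → ℕ) : ℕ := ∏ i, (α i).factorial

/-- The spectral subspace `E_λ = Ran 1_{(-∞,λ]}(-Δ + |y|²)` on `L²(ℝ^{d₁+d₂})`, realized
concretely as the set of (smooth representatives of) functions of the form
`f(y,z) = Σ_{2|α|+d₁ ≤ λ} Φ_α(y) g_α(z)` with each `g_α` square-integrable with Fourier
transform supported in the closed ball of radius `(λ - 2|α| - d₁)^{1/2}`. -/
def SpecSubspace (d₁ d₂ : ℕ) (lam : ℝ) (f : EuclideanSpace ℝ (Fin (d₁ + d₂)) → ℂ) : Prop :=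
  ∃ (S : Finset (Fin d₁ → ℕ)) (g : (Fin d₁ → ℕ) → EuclideanSpace ℝ (Fin d₂) → ℂ),
    (∀ α ∈ S, 2 * (mdeg α : ℝ) + d₁ ≤ lam) ∧
    (∀ α ∈ S, Bandlimited (Real.sqrt (lam - (2 * (mdeg α : ℝ) + d₁))) (g α)) ∧
    ∀ x, f x = ∑ α ∈ S, (hermiteProd α (fstC d₁ d₂ x) : ℂ) * g α (sndC d₁ d₂ x)

/-- The open cube `Λ_L(x) = x + (-L/2, L/2)^n`. -/
def cube {n : ℕ} (L : ℝ) (x : EuclideanSpace ℝ (Fin n)) : Set (EuclideanSpace ℝ (Fin n)) :=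
  {y | ∀ i, |y i - x i| < L / 2}

/-- First-order partial derivative in coordinate `i`. -/
def pderiv1 {n : ℕ} (i : Fin n) (f : EuclideanSpace ℝ (Fin n) → ℂ) :
    EuclideanSpace ℝ (Fin n) → ℂ :=
  fun x => fderiv ℝ f x (EuclideanSpace.single i 1)

/-- Iterated partial derivatives along a list of coordinates. -/
def listDeriv {n : ℕ} : List (Fin n) → (EuclideanSpace ℝ (Fin n) → ℂ) →
    EuclideanSpace ℝ (Fin n) → ℂ
  | [], f => f
  | i :: is, f => pderiv1 i (listDeriv is f)

/-- The partial derivative `∂^α` for a multiindex `α`. -/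
def mderiv {n : ℕ} (α : Fin n → ℕ) (f : EuclideanSpace ℝ (Fin n) → ℂ) :
    EuclideanSpace ℝ (Fin n) → ℂ :=
  listDeriv ((List.finRange n).flatMap fun i => List.replicate (α i) i) f

/-- `C_B(m,λ) = 2^m ∏_{k=0}^{m-1} (λ + 2k)`. -/
def CB (m : ℕ) (lam : ℝ) : ℝ := 2 ^ m * ∏ k ∈ Finset.range m, (lam + 2 * k)

/-- `(Q_k)_{k ∈ ι}` is an (at most countable) essential covering of `ℝ^n` by measurable
sets, of multiplicity at most `κ`. -/
def IsEssentialCovering {n : ℕ} {ι : Type*} (Q : ι → Set (EuclideanSpace ℝ (Fin n)))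
    (κ : ℝ) : Prop :=
  Countable ι ∧ (∀ k, MeasurableSet (Q k)) ∧
    volume ((Set.univ : Set (EuclideanSpace ℝ (Fin n))) \ ⋃ k, Q k) = 0 ∧
    ∀ x, ∑' k, (Q k).indicator (fun _ => (1 : ℝ≥0∞)) x ≤ ENNReal.ofReal κ

/-- The set `K_c` of indices whose `Q_k` meets `B(0, Cλ^{1/2}) × ℝ^{d₂}`, where
`C = 32 d₁ (1 + √(log κ))`. -/
def coveringCore (d₁ d₂ : ℕ) {ι : Type*} (Q : ι → Set (EuclideanSpace ℝ (Fin (d₁ + d₂))))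
    (κ lam : ℝ) : Set ι :=
  {k | (Q k ∩ {x | fstC d₁ d₂ x ∈
      Metric.ball (0 : EuclideanSpace ℝ (Fin d₁))
        (32 * d₁ * (1 + Real.sqrt (Real.log κ)) * Real.sqrt lam)}).Nonempty}

/-- The set `K_g` of good indices for `f`: those `k` for which the localized
Bernstein-type inequality holds on `Q_k` for all `m ≥ 1`. -/
def goodIdx (d₁ d₂ : ℕ) {ι : Type*} (Q : ι → Set (EuclideanSpace ℝ (Fin (d₁ + d₂))))
    (κ lam : ℝ) (f : EuclideanSpace ℝ (Fin (d₁ + d₂)) → ℂ) : Set ι :=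
  {k | ∀ m : ℕ, 1 ≤ m →
    ∑ α ∈ Finset.Nat.antidiagonalTuple (d₁ + d₂) m,
        (1 / (mfact α : ℝ)) * ∫ x in Q k, ‖mderiv α f x‖ ^ 2 ≤
      2 ^ (m + 1) * κ * (CB m lam / m.factorial) * ∫ x in Q k, ‖f x‖ ^ 2}

/-- Embedding `ℝ^n ↪ ℂ^n`. -/
def cembed {n : ℕ} (x : EuclideanSpace ℝ (Fin n)) : EuclideanSpace ℂ (Fin n) :=
  WithLp.toLp 2 (fun i => (x i : ℂ))

/-- The set `Q(x) = B(x^{(1)}, ρ(x^{(1)})) × Λ_L(x^{(2)})`. -/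
def QSet (d₁ d₂ : ℕ) (ρ : EuclideanSpace ℝ (Fin d₁) → ℝ) (L : ℝ)
    (x : EuclideanSpace ℝ (Fin (d₁ + d₂))) : Set (EuclideanSpace ℝ (Fin (d₁ + d₂))) :=
  {w | fstC d₁ d₂ w ∈ Metric.ball (fstC d₁ d₂ x) (ρ (fstC d₁ d₂ x)) ∧
    sndC d₁ d₂ w ∈ cube L (sndC d₁ d₂ x)}

/-- The operator `P g = -Σ_{j ∈ J} ∂_j² g + (Σ_{i ∈ I} x_i²) g + #(I∩J) · g`. -/
def Pop {n : ℕ} (I J : Finset (Fin n)) (f : EuclideanSpace ℝ (Fin n) → ℂ) :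
    EuclideanSpace ℝ (Fin n) → ℂ :=
  fun x => -(∑ j ∈ J, pderiv1 j (pderiv1 j f) x) +
    ((∑ i ∈ I, (x i) ^ 2 : ℝ) : ℂ) * f x + ((I ∩ J).card : ℂ) * f x

/-! Each `g_α` is an inverse Fourier integral `∫ F(ξ) e^{i⟨ξ,z⟩} dξ` of an integrable `F`
supported in a ball of radius `r`. Expanding the exponential, the `m`-th Taylor coefficient of
this integral at `0` has norm at most `‖F‖₁ r^m / m!`, so the same integral with complex `z` is a
power series of infinite radius, i.e. entire. Hermite functions are polynomials times
`e^{-t²/2}`, hence entire, and restrictions of entire functions form a subalgebra that is stable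
under complex-linear changes of variables; `f` is built from these pieces. -/

open scoped Nat

section FourierLaplace

variable {α E : Type*} [MeasurableSpace α] {μ : Measure α} [NormedAddCommGroup E]
  [NormedSpace ℂ E]

lemma continuous_expSeries_compContinuousLinearMap (m : ℕ) :
    Continuous fun ℓ : StrongDual ℂ E =>
      (NormedSpace.expSeries ℂ ℂ).compContinuousLinearMap ℓ m :=
  (NormedSpace.expSeries ℂ ℂ m).compContinuousLinearMapLRight.cont.comp
    (continuous_pi fun _ => continuous_id)

lemma norm_smul_expSeries_compContinuousLinearMap_le {a : ℂ} {ℓ : StrongDual ℂ E} {C : ℝ}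
    (h : a ≠ 0 → ‖ℓ‖ ≤ C) (m : ℕ) :
    ‖a • (NormedSpace.expSeries ℂ ℂ).compContinuousLinearMap ℓ m‖ ≤ ‖a‖ * (C ^ m / m !) := by
  rw [norm_smul]
  rcases eq_or_ne a 0 with rfl | ha
  · simp
  have hexp : ‖NormedSpace.expSeries ℂ ℂ m‖ ≤ (m ! : ℝ)⁻¹ := by
    rw [NormedSpace.expSeries, norm_smul, norm_inv, Complex.norm_natCast]
    exact mul_le_of_le_one_right (by positivity) ContinuousMultilinearMap.norm_mkPiAlgebraFin.le
  gcongr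
  calc ‖(NormedSpace.expSeries ℂ ℂ).compContinuousLinearMap ℓ m‖
      ≤ ‖NormedSpace.expSeries ℂ ℂ m‖ * ∏ _i : Fin m, ‖ℓ‖ :=
        ContinuousMultilinearMap.norm_compContinuousLinearMap_le _ _
    _ ≤ (m ! : ℝ)⁻¹ * C ^ m := by
        rw [Finset.prod_const, Finset.card_univ, Fintype.card_fin]
        gcongr
        exact h ha
    _ = C ^ m / m ! := inv_mul_eq_div _ _

variable {F : α → ℂ} {L : α → StrongDual ℂ E} {C : ℝ}

lemma integrable_smul_expSeries_compContinuousLinearMap (hF : Integrable F μ)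
    (hL : AEStronglyMeasurable L μ) (hC : ∀ ξ, F ξ ≠ 0 → ‖L ξ‖ ≤ C) (m : ℕ) :
    Integrable (fun ξ => F ξ • (NormedSpace.expSeries ℂ ℂ).compContinuousLinearMap (L ξ) m) μ :=
  (hF.norm.mul_const _).mono'
    (hF.aestronglyMeasurable.smul
      ((continuous_expSeries_compContinuousLinearMap m).comp_aestronglyMeasurable hL))
    (ae_of_all _ fun ξ => norm_smul_expSeries_compContinuousLinearMap_le (hC ξ) m)

theorem hasFPowerSeriesOnBall_integral_mul_exp (hF : Integrable F μ)
    (hL : AEStronglyMeasurable L μ) (hC : ∀ ξ, F ξ ≠ 0 → ‖L ξ‖ ≤ C) :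
    HasFPowerSeriesOnBall (fun v => ∫ ξ, F ξ * Complex.exp (L ξ v) ∂μ)
      (fun m => ∫ ξ, F ξ • (NormedSpace.expSeries ℂ ℂ).compContinuousLinearMap (L ξ) m ∂μ)
      0 ⊤ := by
  set A := ∫ ξ, ‖F ξ‖ ∂μ
  have hint := integrable_smul_expSeries_compContinuousLinearMap hF hL hC
  have hcoeff : ∀ m, ‖∫ ξ, F ξ • (NormedSpace.expSeries ℂ ℂ).compContinuousLinearMap (L ξ) m ∂μ‖
      ≤ A * (C ^ m / m !) := fun m => by
    refine (norm_integral_le_integral_norm _).trans ?_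
    rw [← integral_mul_const]
    exact integral_mono (hint m).norm (hF.norm.mul_const _)
      fun ξ => norm_smul_expSeries_compContinuousLinearMap_le (hC ξ) m
  refine ⟨?_, ENNReal.zero_lt_top, fun {v} _ => ?_⟩
  · refine top_le_iff.2 (FormalMultilinearSeries.radius_eq_top_of_summable_norm _ fun ρ => ?_)
    refine .of_nonneg_of_le (fun m => by positivity) (fun m => ?_)
      ((Real.summable_pow_div_factorial (C * ρ)).mul_left A)
    calc _ ≤ A * (C ^ m / m !) * (ρ : ℝ) ^ m := by gcongr; exact hcoeff m
      _ = A * ((C * ρ) ^ m / m !) := by ring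
  set Φ := fun m ξ => F ξ • (NormedSpace.expSeries ℂ ℂ).compContinuousLinearMap (L ξ) m
  have hterm_int : ∀ m, Integrable (fun ξ => Φ m ξ fun _ => v) μ := fun m =>
    (ContinuousMultilinearMap.apply ℂ (fun _ : Fin m => E) ℂ fun _ => v).integrable_comp (hint m)
  have hterm_le : ∀ m ξ, ‖Φ m ξ fun _ => v‖ ≤ ‖F ξ‖ * (C ^ m / m !) * ‖v‖ ^ m := fun m ξ => by
    refine ((Φ m ξ).le_opNorm _).trans ?_
    rw [Finset.prod_const, Finset.card_univ, Fintype.card_fin]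
    gcongr
    exact norm_smul_expSeries_compContinuousLinearMap_le (hC ξ) m
  have hsummable : Summable fun m => ∫ ξ, ‖Φ m ξ fun _ => v‖ ∂μ := by
    refine .of_nonneg_of_le (fun m => integral_nonneg fun ξ => norm_nonneg _) (fun m => ?_)
      ((Real.summable_pow_div_factorial (C * ‖v‖)).mul_left A)
    calc _ ≤ ∫ ξ, ‖F ξ‖ * (C ^ m / m !) * ‖v‖ ^ m ∂μ :=
          integral_mono (hterm_int m).norm ((hF.norm.mul_const _).mul_const _) (hterm_le m)
      _ = A * ((C * ‖v‖) ^ m / m !) := by rw [integral_mul_const, integral_mul_const]; ring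
  have hpointwise : ∀ ξ, ∑' m, (Φ m ξ fun _ => v) = F ξ * Complex.exp (L ξ v) := fun ξ => by
    rw [Complex.exp_eq_exp_ℂ]
    exact ((NormedSpace.expSeries_hasSum_exp (L ξ v)).mul_left (F ξ)).tsum_eq
  simp_rw [zero_add, ContinuousMultilinearMap.integral_apply (hint _), ← hpointwise]
  exact hasSum_integral_of_summable_integral_norm hterm_int hsummable

theorem analyticOnNhd_integral_mul_exp (hF : Integrable F μ) (hL : AEStronglyMeasurable L μ)
    (hC : ∀ ξ, F ξ ≠ 0 → ‖L ξ‖ ≤ C) :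
    AnalyticOnNhd ℂ (fun v => ∫ ξ, F ξ * Complex.exp (L ξ v) ∂μ) univ := fun _ _ =>
  (hasFPowerSeriesOnBall_integral_mul_exp hF hL hC).analyticAt_of_mem (by simp)

end FourierLaplace

section cembed

variable {n : ℕ}

lemma continuous_cembed : Continuous (cembed : EuclideanSpace ℝ (Fin n) → _) :=
  (PiLp.continuous_toLp 2 _).comp
    (continuous_pi fun i => Complex.continuous_ofReal.comp (PiLp.continuous_apply 2 _ i))

lemma norm_cembed (x : EuclideanSpace ℝ (Fin n)) : ‖cembed x‖ = ‖x‖ := by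
  simp [cembed, EuclideanSpace.norm_eq]

lemma inner_cembed_cembed (x y : EuclideanSpace ℝ (Fin n)) :
    inner ℂ (cembed x) (cembed y) = ((inner ℝ x y : ℝ) : ℂ) := by
  simp [cembed, PiLp.inner_apply]

end cembed

def entireRestrictions (n : ℕ) : Subalgebra ℂ (EuclideanSpace ℝ (Fin n) → ℂ) where
  carrier := {f | ∃ F : EuclideanSpace ℂ (Fin n) → ℂ,
    AnalyticOnNhd ℂ F univ ∧ ∀ x, F (cembed x) = f x}
  mul_mem' := fun ⟨F, hF, hFf⟩ ⟨G, hG, hGg⟩ =>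
    ⟨F * G, hF.mul hG, fun x => by simp [hFf, hGg]⟩
  add_mem' := fun ⟨F, hF, hFf⟩ ⟨G, hG, hGg⟩ =>
    ⟨F + G, hF.add hG, fun x => by simp [hFf, hGg]⟩
  algebraMap_mem' c := ⟨fun _ => c, analyticOnNhd_const, fun _ => rfl⟩

namespace entireRestrictions

lemma comp_mem {m n : ℕ} {f : EuclideanSpace ℝ (Fin n) → ℂ} (hf : f ∈ entireRestrictions n)
    (A : EuclideanSpace ℂ (Fin m) →L[ℂ] EuclideanSpace ℂ (Fin n))
    {a : EuclideanSpace ℝ (Fin m) → EuclideanSpace ℝ (Fin n)}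
    (ha : ∀ x, A (cembed x) = cembed (a x)) :
    f ∘ a ∈ entireRestrictions m := by
  obtain ⟨F, hF, hFf⟩ := hf
  exact ⟨F ∘ A, hF.comp (A.analyticOnNhd _) (mapsTo_univ _ _), fun x => by simp [ha, hFf]⟩

lemma fstC_mem {d₁ d₂ : ℕ} {f : EuclideanSpace ℝ (Fin d₁) → ℂ} (hf : f ∈ entireRestrictions d₁) :
    (fun x => f (fstC d₁ d₂ x)) ∈ entireRestrictions (d₁ + d₂) :=
  comp_mem hf
    ((ContinuousLinearMap.fst ℂ _ _).comp EuclideanSpace.finAddEquivProd.toContinuousLinearMap)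
    fun _ => rfl

lemma sndC_mem {d₁ d₂ : ℕ} {f : EuclideanSpace ℝ (Fin d₂) → ℂ} (hf : f ∈ entireRestrictions d₂) :
    (fun x => f (sndC d₁ d₂ x)) ∈ entireRestrictions (d₁ + d₂) :=
  comp_mem hf
    ((ContinuousLinearMap.snd ℂ _ _).comp EuclideanSpace.finAddEquivProd.toContinuousLinearMap)
    fun _ => rfl

lemma coord_mem {n : ℕ} {F : ℂ → ℂ} (hF : Differentiable ℂ F) {f : ℝ → ℂ}
    (hFf : ∀ t : ℝ, F t = f t) (j : Fin n) :
    (fun y : EuclideanSpace ℝ (Fin n) => f (y j)) ∈ entireRestrictions n :=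
  ⟨F ∘ (EuclideanSpace.proj j : EuclideanSpace ℂ (Fin n) →L[ℂ] ℂ),
    fun w _ => (hF.analyticAt _).comp (ContinuousLinearMap.analyticAt _ w),
    fun y => hFf (y j)⟩

end entireRestrictions

lemma Bandlimited.mem_entireRestrictions {n : ℕ} {r : ℝ} {g : EuclideanSpace ℝ (Fin n) → ℂ}
    (hg : Bandlimited r g) : g ∈ entireRestrictions n := by
  obtain ⟨F, hF2, hFsupp, hFg⟩ := hg
  have hF : Integrable F := memLp_one_iff_integrable.1 <|
    hF2.mono_exponent_of_measure_support_ne_top hFsupp measure_closedBall_lt_top.ne (by norm_num)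
  -- `innerSL ℂ (cembed ξ)` is the complex-linear extension of `⟪ξ, ·⟫`, as `ξ` is real.
  refine ⟨fun v => ∫ ξ, F ξ * Complex.exp ((Complex.I • innerSL ℂ (cembed ξ)) v),
    analyticOnNhd_integral_mul_exp (C := r) hF ?_ fun ξ hξ => ?_, fun z => ?_⟩
  · exact (((continuous_const (y := Complex.I)).smul (innerSL ℂ).continuous).comp
      continuous_cembed).aestronglyMeasurable
  · rw [norm_smul, Complex.norm_I, one_mul, innerSL_apply_norm, norm_cembed]
    simpa using not_imp_comm.1 (hFsupp ξ) hξ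
  · simp [hFg, inner_cembed_cembed]

lemma hermiteFun_coord_mem_entireRestrictions {n : ℕ} (k : ℕ) (j : Fin n) :
    (fun y : EuclideanSpace ℝ (Fin n) => (hermiteFun k (y j) : ℂ)) ∈ entireRestrictions n := by
  refine entireRestrictions.coord_mem (f := fun t => (hermiteFun k t : ℂ)) (F := fun w =>
      (((2 : ℝ) ^ k * k ! * √π) ^ (-(1 : ℝ) / 2) : ℝ) * Polynomial.aeval w (physHermite k) *
        Complex.exp (-w ^ 2 / 2))
    (((differentiable_const _).mul (Polynomial.differentiable_aeval _)).mul (by fun_prop))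
    (fun t => ?_) j
  have hpoly : Polynomial.aeval (t : ℂ) (physHermite k) = (((physHermite k).eval t : ℝ) : ℂ) :=
    Polynomial.aeval_ofReal _ _
  rw [hpoly, hermiteFun]
  push_cast
  ring

lemma hermiteProd_mem_entireRestrictions {d₁ : ℕ} (α : Fin d₁ → ℕ) :
    (fun y => (hermiteProd α y : ℂ)) ∈ entireRestrictions d₁ := by
  have hprod : (fun y => (hermiteProd α y : ℂ)) = ∏ j, fun y => (hermiteFun (α j) (y j) : ℂ) := by
    ext y
    simp [hermiteProd, Finset.prod_apply]
  rw [hprod]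
  exact prod_mem fun j _ => hermiteFun_coord_mem_entireRestrictions _ _

theorem spectral_subspace_entire_extension_general
    (d₁ d₂ : ℕ) (lam : ℝ)
    (f : EuclideanSpace ℝ (Fin (d₁ + d₂)) → ℂ) (hf : SpecSubspace d₁ d₂ lam f) :
    ∃ F : EuclideanSpace ℂ (Fin (d₁ + d₂)) → ℂ,
      AnalyticOnNhd ℂ F Set.univ ∧
        ∀ᵐ x : EuclideanSpace ℝ (Fin (d₁ + d₂)) ∂volume, F (cembed x) = f x := by
  obtain ⟨S, g, -, hg, hfg⟩ := hf
  have hf : f ∈ entireRestrictions (d₁ + d₂) := by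
    rw [show f = ∑ α ∈ S, fun x => (hermiteProd α (fstC d₁ d₂ x) : ℂ) * g α (sndC d₁ d₂ x) by
      ext x
      simp [hfg, Finset.sum_apply]]
    exact sum_mem fun α hα => mul_mem
      (entireRestrictions.fstC_mem (hermiteProd_mem_entireRestrictions α))
      (entireRestrictions.sndC_mem (hg α hα).mem_entireRestrictions)
  obtain ⟨F, hF, hFf⟩ := hf
  exact ⟨F, hF, ae_of_all _ hFf⟩

/-- **Analytic extension of spectral subspace functions** (part of Corollary A.4 /
`cor:specfamH`). For every `λ ≥ 1`, every `f ∈ E_λ` has a representative extending to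
an entire function on `ℂ^d`. -/
theorem spectral_subspace_entire_extension
    (d₁ d₂ : ℕ) (hd₁ : 1 ≤ d₁) (lam : ℝ) (hlam : 1 ≤ lam)
    (f : EuclideanSpace ℝ (Fin (d₁ + d₂)) → ℂ) (hf : SpecSubspace d₁ d₂ lam f) :
    ∃ F : EuclideanSpace ℂ (Fin (d₁ + d₂)) → ℂ,
      AnalyticOnNhd ℂ F Set.univ ∧
        ∀ᵐ x : EuclideanSpace ℝ (Fin (d₁ + d₂)) ∂volume, F (cembed x) = f x :=
  spectral_subspace_entire_extension_general d₁ d₂ lam f hf
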